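/- arXiv:2307.05753 — 6 statements merged into one kernel-verified Lean document; each statement's English description precedes it below -/
import Mathlib

section
/- Let f(x) = (1/N) Σ_{i=1}^N q_i(β_iᵀ x) on ℝ^d, where each q_i : ℝ → ℝ is twice continuously differentiable with |q_i''(t)| ≤ L₀ for all t, and each β_i ∈ ℝ^d satisfies ‖β_i‖₂² ≤ R. Then ED_α ≤ (L₀ R)^α for every α ≥ 1, and ED_α ≤ (L₀ R)^α · d^{1−α} for every 0 < α < 1. -/
/-!
Each ridge term contributes a rank-one Hessian, so `∇²f(x) = ∑ₖ cₖ βₖ βₖᵀ` with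
`|cₖ| ≤ L₀ / N`. Evaluating the quadratic form on an orthonormal
eigenbasis and using Parseval bounds the trace norm `∑ⱼ |λⱼ|` by `∑ₖ |cₖ| ‖βₖ‖² ≤ L₀ R`.
Superadditivity of `t ↦ t ^ α` for `α ≥ 1`, and Hölder's inequality for `α < 1`, turn this
`ℓ¹` bound on the spectrum into the bounds on `∑ⱼ |λⱼ| ^ α`.
-/

open Matrix Finset

theorem Real.sum_rpow_le_rpow_sum {ι : Type*} (s : Finset ι) {a : ι → ℝ}
    (ha : ∀ i ∈ s, 0 ≤ a i) {p : ℝ} (hp : 1 ≤ p) :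
    ∑ i ∈ s, a i ^ p ≤ (∑ i ∈ s, a i) ^ p := by
  classical
  induction s using Finset.induction_on with
  | empty => simp [Real.zero_rpow (by linarith : p ≠ 0)]
  | insert j s hj ih =>
    rw [sum_insert hj, sum_insert hj]
    have ha' : ∀ i ∈ s, 0 ≤ a i := fun i hi => ha i (mem_insert_of_mem hi)
    calc a j ^ p + ∑ i ∈ s, a i ^ p ≤ a j ^ p + (∑ i ∈ s, a i) ^ p := by gcongr; exact ih ha'
      _ ≤ (a j + ∑ i ∈ s, a i) ^ p :=
        Real.add_rpow_le_rpow_add (ha j (mem_insert_self j s)) (sum_nonneg ha') hp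

theorem Real.sum_rpow_le_card_rpow_mul_rpow_sum {ι : Type*} (s : Finset ι) {a : ι → ℝ}
    (ha : ∀ i ∈ s, 0 ≤ a i) {p : ℝ} (hp₀ : 0 < p) (hp₁ : p ≤ 1) :
    ∑ i ∈ s, a i ^ p ≤ (#s : ℝ) ^ (1 - p) * (∑ i ∈ s, a i) ^ p := by
  have hpow : ∀ i ∈ s, (a i ^ p) ^ p⁻¹ = a i := fun i hi => Real.rpow_rpow_inv (ha i hi) hp₀.ne'
  have holder := Real.rpow_sum_le_const_mul_sum_rpow_of_nonneg (s := s) (f := fun i => a i ^ p)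
    ((one_le_inv₀ hp₀).2 hp₁) (fun i hi => Real.rpow_nonneg (ha i hi) p)
  rw [sum_congr rfl hpow] at holder
  have hcard : (0 : ℝ) ≤ #s := Nat.cast_nonneg _
  calc ∑ i ∈ s, a i ^ p = ((∑ i ∈ s, a i ^ p) ^ p⁻¹) ^ p :=
        (Real.rpow_inv_rpow (sum_nonneg fun i hi => Real.rpow_nonneg (ha i hi) p) hp₀.ne').symm
    _ ≤ ((#s : ℝ) ^ (p⁻¹ - 1) * ∑ i ∈ s, a i) ^ p := by
      gcongr
      exact Real.rpow_nonneg (sum_nonneg fun i hi => Real.rpow_nonneg (ha i hi) p) _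
    _ = (#s : ℝ) ^ (1 - p) * (∑ i ∈ s, a i) ^ p := by
      rw [Real.mul_rpow (Real.rpow_nonneg hcard _) (sum_nonneg ha), ← Real.rpow_mul hcard,
        sub_mul, inv_mul_cancel₀ hp₀.ne', one_mul]

theorem Matrix.IsHermitian.sum_abs_eigenvalues_le {n ι : Type*} [Fintype n] [DecidableEq n]
    [Fintype ι] {A : Matrix n n ℝ} (hA : A.IsHermitian) (c : ι → ℝ) (v : ι → n → ℝ)
    (hAe : A = ∑ k, c k • vecMulVec (v k) (v k)) :
    ∑ j, |hA.eigenvalues j| ≤ ∑ k, |c k| * ∑ i, v k i ^ 2 := by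
  set b := hA.eigenvectorBasis
  have quadForm : ∀ w, w ⬝ᵥ A *ᵥ w = ∑ k, c k * (v k ⬝ᵥ w) ^ 2 := by
    intro w
    simp only [hAe, sum_mulVec, smul_mulVec, vecMulVec_mulVec, dotProduct_sum, dotProduct_smul]
    refine sum_congr rfl fun k _ => ?_
    simp [dotProduct_comm w, sq]
  have eig : ∀ j, hA.eigenvalues j = ∑ k, c k * (v k ⬝ᵥ b j) ^ 2 := by
    intro j
    simpa [quadForm] using hA.eigenvalues_eq j
  have parseval : ∀ k, ∑ j, (v k ⬝ᵥ b j) ^ 2 = ∑ i, v k i ^ 2 := by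
    intro k
    have := b.sum_sq_inner_left (WithLp.toLp 2 (v k))
    simpa [EuclideanSpace.inner_eq_star_dotProduct, EuclideanSpace.real_norm_sq_eq,
      dotProduct_comm] using this
  calc ∑ j, |hA.eigenvalues j| ≤ ∑ j, ∑ k, |c k| * (v k ⬝ᵥ b j) ^ 2 := by
        refine sum_le_sum fun j _ => ?_
        rw [eig]
        refine (abs_sum_le_sum_abs _ _).trans_eq ?_
        simp only [abs_mul, abs_sq]
    _ = ∑ k, |c k| * ∑ i, v k i ^ 2 := by
        rw [sum_comm]
        simp only [← mul_sum, parseval]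

theorem iteratedFDeriv_two_comp_clm_apply {E : Type*} [NormedAddCommGroup E] [NormedSpace ℝ E]
    {g : ℝ → ℝ} (hg : ContDiff ℝ 2 g) (ℓ : E →L[ℝ] ℝ) (x u v : E) :
    iteratedFDeriv ℝ 2 (g ∘ ℓ) x ![u, v] = deriv (deriv g) (ℓ x) * ℓ u * ℓ v := by
  rw [ℓ.iteratedFDeriv_comp_right hg x le_rfl,
    ContinuousMultilinearMap.compContinuousLinearMap_apply,
    iteratedFDeriv_apply_eq_iteratedDeriv_mul_prod, iteratedDeriv_succ, iteratedDeriv_one,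
    Fin.prod_univ_two, smul_eq_mul]
  simp only [Matrix.cons_val_zero, Matrix.cons_val_one]
  ring

theorem iteratedFDeriv_two_mul_sum_comp_clm_apply {ι E : Type*} [Fintype ι]
    [NormedAddCommGroup E] [NormedSpace ℝ E] (a : ℝ) {g : ι → ℝ → ℝ} (hg : ∀ k, ContDiff ℝ 2 (g k))
    (ℓ : ι → E →L[ℝ] ℝ) (x u v : E) :
    iteratedFDeriv ℝ 2 (fun y => a * ∑ k, g k (ℓ k y)) x ![u, v] =
      ∑ k, a * deriv (deriv (g k)) (ℓ k x) * ℓ k u * ℓ k v := by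
  have hsmooth : ∀ k, ContDiff ℝ 2 (g k ∘ ℓ k) := fun k => (hg k).comp (ℓ k).contDiff
  change iteratedFDeriv ℝ 2 (fun y => a • ∑ k, (g k ∘ ℓ k) y) x ![u, v] = _
  rw [iteratedFDeriv_const_smul_apply' (ContDiff.sum fun k _ => hsmooth k).contDiffAt,
    iteratedFDeriv_fun_sum_apply fun k _ => (hsmooth k).contDiffAt]
  simp only [_root_.smul_apply, _root_.sum_apply,
    iteratedFDeriv_two_comp_clm_apply (hg _), smul_eq_mul, mul_sum]
  exact sum_congr rfl fun k _ => by ring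

noncomputable def hessianMatrix {n : Type*} [Fintype n] [DecidableEq n] (f : (n → ℝ) → ℝ)
    (x : n → ℝ) : Matrix n n ℝ :=
  Matrix.of fun i j => iteratedFDeriv ℝ 2 f x ![Pi.single i 1, Pi.single j 1]

theorem hessianMatrix_mul_sum_comp_dotProduct {n ι : Type*} [Fintype n] [DecidableEq n]
    [Fintype ι] (a : ℝ) {g : ι → ℝ → ℝ} (hg : ∀ k, ContDiff ℝ 2 (g k)) (β : ι → n → ℝ)
    (x : n → ℝ) :
    hessianMatrix (fun y => a * ∑ k, g k (β k ⬝ᵥ y)) x =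
      ∑ k, (a * deriv (deriv (g k)) (β k ⬝ᵥ x)) • vecMulVec (β k) (β k) := by
  let ℓ : ι → (n → ℝ) →L[ℝ] ℝ := fun k =>
    LinearMap.toContinuousLinearMap (dotProductBilin ℝ ℝ (β k))
  ext i j
  rw [hessianMatrix, of_apply, show (fun y => a * ∑ k, g k (β k ⬝ᵥ y)) =
    fun y => a * ∑ k, g k (ℓ k y) from rfl, iteratedFDeriv_two_mul_sum_comp_clm_apply _ hg]
  simp [ℓ, Matrix.sum_apply, vecMulVec_apply, dotProduct_single, mul_assoc]

theorem sum_abs_eigenvalues_le_of_eq_hessianMatrix {n ι : Type*} [Fintype n] [DecidableEq n]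
    [Fintype ι] [Nonempty ι] {g : ι → ℝ → ℝ} (hg : ∀ k, ContDiff ℝ 2 (g k)) {β : ι → n → ℝ}
    {L R : ℝ} (hg'' : ∀ k t, |deriv (deriv (g k)) t| ≤ L) (hβ : ∀ k, ∑ i, β k i ^ 2 ≤ R)
    (x : n → ℝ) {A : Matrix n n ℝ} (hA : A.IsHermitian)
    (hAe : A = hessianMatrix (fun y => 1 / (Fintype.card ι : ℝ) * ∑ k, g k (β k ⬝ᵥ y)) x) :
    ∑ j, |hA.eigenvalues j| ≤ L * R := by
  obtain ⟨k₀⟩ := ‹Nonempty ι›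
  have hL : 0 ≤ L := (abs_nonneg _).trans (hg'' k₀ 0)
  rw [hessianMatrix_mul_sum_comp_dotProduct _ hg] at hAe
  calc ∑ j, |hA.eigenvalues j|
      ≤ ∑ k, |1 / (Fintype.card ι : ℝ) * deriv (deriv (g k)) (β k ⬝ᵥ x)| * ∑ i, β k i ^ 2 :=
        hA.sum_abs_eigenvalues_le _ _ hAe
    _ ≤ ∑ _k : ι, 1 / (Fintype.card ι : ℝ) * (L * R) := by
        refine sum_le_sum fun k _ => ?_
        rw [abs_mul, abs_of_nonneg (by positivity), mul_assoc]
        gcongr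
        exacts [hg'' k _, hβ k]
    _ = L * R := by
        rw [sum_const, card_univ, nsmul_eq_mul]
        field_simp

/-- Effective-dimension bound for ridge-separable objectives
`f x = (1/N) ∑ᵢ qᵢ(βᵢᵀ x)` with `|qᵢ''| ≤ L₀` and `‖βᵢ‖₂² ≤ R`.
The effective dimension `ED_α` is the supremum over `x` of the sum of the
`α`-th powers of the singular values (absolute eigenvalues) of the Hessian. -/
theorem stmt_1 (d N : ℕ) (hN : 0 < N)
    (q : Fin N → ℝ → ℝ) (βv : Fin N → Fin d → ℝ)
    (hq : ∀ i, ContDiff ℝ 2 (q i))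
    (L₀ R : ℝ)
    (hq'' : ∀ i t, |deriv (deriv (q i)) t| ≤ L₀)
    (hβv : ∀ i, ∑ j, (βv i j) ^ 2 ≤ R)
    (f : (Fin d → ℝ) → ℝ)
    (hf : ∀ x, f x = (1 / (N : ℝ)) * ∑ i, q i (∑ j, βv i j * x j))
    (Hess : (Fin d → ℝ) → Matrix (Fin d) (Fin d) ℝ)
    (hHess : ∀ x i j, Hess x i j =
      iteratedFDeriv ℝ 2 f x ![Pi.single i 1, Pi.single j 1])
    (hsymm : ∀ x, (Hess x).IsHermitian)
    (α : ℝ) :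
    (1 ≤ α → (⨆ x, ∑ i, |(hsymm x).eigenvalues i| ^ α) ≤ (L₀ * R) ^ α) ∧
    (0 < α → α < 1 →
      (⨆ x, ∑ i, |(hsymm x).eigenvalues i| ^ α) ≤ (L₀ * R) ^ α * (d : ℝ) ^ (1 - α)) := by
  have : Nonempty (Fin N) := ⟨⟨0, hN⟩⟩
  have traceBound : ∀ x, ∑ j, |(hsymm x).eigenvalues j| ≤ L₀ * R := fun x =>
    sum_abs_eigenvalues_le_of_eq_hessianMatrix hq hq'' hβv x (hsymm x) <| by
      ext i j
      rw [hHess, Fintype.card_fin, hessianMatrix, of_apply, funext hf]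
      rfl
  refine ⟨fun hα => ciSup_le fun x => ?_, fun hα₀ hα₁ => ciSup_le fun x => ?_⟩
  · calc ∑ i, |(hsymm x).eigenvalues i| ^ α ≤ (∑ i, |(hsymm x).eigenvalues i|) ^ α :=
          Real.sum_rpow_le_rpow_sum (a := fun i => |(hsymm x).eigenvalues i|) _
            (fun i _ => abs_nonneg _) hα
      _ ≤ (L₀ * R) ^ α := by gcongr; exact traceBound x
  · calc ∑ i, |(hsymm x).eigenvalues i| ^ α
          ≤ (d : ℝ) ^ (1 - α) * (∑ i, |(hsymm x).eigenvalues i|) ^ α := by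
          simpa using Real.sum_rpow_le_card_rpow_mul_rpow_sum univ
            (a := fun i => |(hsymm x).eigenvalues i|) (fun i _ => abs_nonneg _) hα₀ hα₁.le
      _ ≤ (L₀ * R) ^ α * (d : ℝ) ^ (1 - α) := by
          rw [mul_comm]
          gcongr
          exact traceBound x
end

section
/- Fix x ∈ ℝ^d and let f(W, w) = wᵀ σ.(Wᵀ x) for W ∈ ℝ^{d×m} and w ∈ ℝ^m, where σ : ℝ → ℝ is twice continuously differentiable and is applied entrywise, with 0 ≤ σ''(t) ≤ α for all t ∈ ℝ. If ‖x‖₂² ≤ r₁ and ‖w‖₁ ≤ r₂, then the trace of the Hessian of f with respect to the joint variable (W, w) ∈ ℝ^{dm + m} satisfies tr(∇² f(W, w)) ≤ α r₁ r₂. (Indeed ∂²f/∂w² = 0 and tr(∂²f/∂W²) = ‖x‖₂² Σ_{i=1}^m σ''((Wᵀx)_i) w_i.) -/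
/-!
Each summand `w_i σ((Wᵀx)_i)` of the network is `L q * σ (M q)` for two linear forms `L`, `M`
of `q = (W, w)`, and its second derivative along `v` is
`2 L v σ'(M p) M v + L p σ''(M p) (M v)²`. Along a coordinate direction of `w` the form `M`
vanishes, while along the `(j, i)` coordinate of `W` only the `i`-th summand survives, with
`L v = 0` and `M v = x_j`. Hence the trace is `‖x‖² Σᵢ wᵢ σ''((Wᵀx)ᵢ) ≤ r₁ · α r₂`.
-/

section SecondDerivative

variable {E F : Type*} [NormedAddCommGroup E] [NormedSpace ℝ E]
  [NormedAddCommGroup F] [NormedSpace ℝ F]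

theorem iteratedFDeriv_two_apply_self {f : E → F} {p : E}
    (hf : DifferentiableAt ℝ (fderiv ℝ f) p) (v : E) :
    iteratedFDeriv ℝ 2 f p ![v, v] = fderiv ℝ (fun q => fderiv ℝ f q v) p v := by
  rw [iteratedFDeriv_two_apply, fderiv_clm_apply hf (differentiableAt_const v)]
  simp

theorem hasFDerivAt_mul_comp (L M : E →L[ℝ] ℝ) {σ : ℝ → ℝ} {p : E}
    (hσ : DifferentiableAt ℝ σ (M p)) :
    HasFDerivAt (fun q => L q * σ (M q)) (L p • deriv σ (M p) • M + σ (M p) • L) p :=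
  L.hasFDerivAt.mul (hσ.hasDerivAt.comp_hasFDerivAt p M.hasFDerivAt)

theorem iteratedFDeriv_two_mul_comp_apply_self (L M : E →L[ℝ] ℝ) {σ : ℝ → ℝ}
    (hσ : ContDiff ℝ 2 σ) (p v : E) :
    iteratedFDeriv ℝ 2 (fun q => L q * σ (M q)) p ![v, v] =
      2 * L v * deriv σ (M p) * M v + L p * deriv (deriv σ) (M p) * M v ^ 2 := by
  have hσ1 : Differentiable ℝ σ := hσ.differentiable (by norm_num)
  have hσ2 : Differentiable ℝ (deriv σ) :=
    (hσ.deriv' (n := 1)).differentiable (by norm_num)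
  have hsmooth : ContDiff ℝ 2 (fun q => L q * σ (M q)) := L.contDiff.mul (hσ.comp M.contDiff)
  have hfv : (fun q => fderiv ℝ (fun q => L q * σ (M q)) q v) =
      fun q => L q * deriv σ (M q) * M v + σ (M q) * L v := by
    ext q
    rw [(hasFDerivAt_mul_comp L M (hσ1 _)).fderiv]
    simp only [add_apply, smul_apply, smul_eq_mul]
    ring
  have hderiv : HasFDerivAt (fun q => L q * deriv σ (M q) * M v + σ (M q) * L v) _ p :=
    ((hasFDerivAt_mul_comp L M (hσ2 _)).mul_const (M v)).fun_add
      ((hσ1 _).hasDerivAt.comp_hasFDerivAt p M.hasFDerivAt |>.mul_const (L v))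
  rw [iteratedFDeriv_two_apply_self
    ((hsmooth.fderiv_right (m := 1) (by norm_num)).differentiable (by norm_num) p),
    hfv, hderiv.fderiv]
  simp only [add_apply, smul_apply, smul_eq_mul]
  ring

end SecondDerivative

section TwoLayerNetwork

variable {d m : ℕ}

def preactivation (x : Fin d → ℝ) (i : Fin m) :
    (Fin d → Fin m → ℝ) × (Fin m → ℝ) →L[ℝ] ℝ :=
  ∑ j, x j • (ContinuousLinearMap.proj i ∘L ContinuousLinearMap.proj j ∘L
    ContinuousLinearMap.fst ℝ (Fin d → Fin m → ℝ) (Fin m → ℝ))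

def outputWeight (i : Fin m) : (Fin d → Fin m → ℝ) × (Fin m → ℝ) →L[ℝ] ℝ :=
  ContinuousLinearMap.proj i ∘L ContinuousLinearMap.snd ℝ (Fin d → Fin m → ℝ) (Fin m → ℝ)

@[simp]
theorem preactivation_apply (x : Fin d → ℝ) (i : Fin m)
    (q : (Fin d → Fin m → ℝ) × (Fin m → ℝ)) :
    preactivation x i q = ∑ j, q.1 j i * x j := by
  simp [preactivation, mul_comm]

@[simp]
theorem outputWeight_apply (i : Fin m) (q : (Fin d → Fin m → ℝ) × (Fin m → ℝ)) :
    outputWeight i q = q.2 i :=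
  rfl

theorem iteratedFDeriv_two_twoLayer_apply_self (x : Fin d → ℝ) {σ : ℝ → ℝ}
    (hσ : ContDiff ℝ 2 σ) (p v : (Fin d → Fin m → ℝ) × (Fin m → ℝ)) :
    iteratedFDeriv ℝ 2 (fun q => ∑ i, q.2 i * σ (∑ j, q.1 j i * x j)) p ![v, v] =
      ∑ i, (2 * v.2 i * deriv σ (preactivation x i p) * preactivation x i v +
        p.2 i * deriv (deriv σ) (preactivation x i p) * preactivation x i v ^ 2) := by
  have hterm : ∀ i, (fun q : (Fin d → Fin m → ℝ) × (Fin m → ℝ) =>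
      q.2 i * σ (∑ j, q.1 j i * x j)) = fun q => outputWeight i q * σ (preactivation x i q) := by
    intro i; ext q; simp
  rw [iteratedFDeriv_fun_sum_apply fun i _ => by
      rw [hterm]
      exact ((outputWeight i).contDiff.mul (hσ.comp (preactivation x i).contDiff)).contDiffAt,
    sum_apply]
  refine Finset.sum_congr rfl fun i _ => ?_
  rw [hterm, iteratedFDeriv_two_mul_comp_apply_self _ _ hσ]
  rfl

theorem preactivation_single_single (x : Fin d → ℝ) (i' : Fin m) (j : Fin d) (i : Fin m) :
    preactivation x i' (Pi.single j (Pi.single i 1), 0) =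
      (Pi.single i (x j) : Fin m → ℝ) i' := by
  rw [preactivation_apply, Finset.sum_eq_single j (fun j' _ hj' => by simp [hj'])
    (fun hj => absurd (Finset.mem_univ j) hj)]
  by_cases h : i' = i <;> simp [h]

theorem iteratedFDeriv_two_twoLayer_inputWeight (x : Fin d → ℝ) {σ : ℝ → ℝ}
    (hσ : ContDiff ℝ 2 σ) (p : (Fin d → Fin m → ℝ) × (Fin m → ℝ)) (j : Fin d) (i : Fin m) :
    iteratedFDeriv ℝ 2 (fun q => ∑ i, q.2 i * σ (∑ j, q.1 j i * x j)) p
        ![(Pi.single j (Pi.single i 1), 0), (Pi.single j (Pi.single i 1), 0)] =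
      p.2 i * deriv (deriv σ) (preactivation x i p) * x j ^ 2 := by
  simp only [iteratedFDeriv_two_twoLayer_apply_self x hσ, preactivation_single_single]
  rw [Finset.sum_eq_single i] <;> simp +contextual

theorem iteratedFDeriv_two_twoLayer_outputWeight (x : Fin d → ℝ) {σ : ℝ → ℝ}
    (hσ : ContDiff ℝ 2 σ) (p : (Fin d → Fin m → ℝ) × (Fin m → ℝ)) (i : Fin m) :
    iteratedFDeriv ℝ 2 (fun q => ∑ i, q.2 i * σ (∑ j, q.1 j i * x j)) p
        ![((0 : Fin d → Fin m → ℝ), Pi.single i 1), ((0 : Fin d → Fin m → ℝ), Pi.single i 1)] =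
      0 := by
  simp [iteratedFDeriv_two_twoLayer_apply_self x hσ]

end TwoLayerNetwork

theorem sum_mul_le_of_sum_abs_le {ι : Type*} (s : Finset ι) {w c : ι → ℝ} {a r : ℝ}
    (ha : 0 ≤ a) (hc : ∀ i ∈ s, 0 ≤ c i ∧ c i ≤ a) (hw : ∑ i ∈ s, |w i| ≤ r) :
    ∑ i ∈ s, w i * c i ≤ a * r :=
  calc ∑ i ∈ s, w i * c i
      ≤ ∑ i ∈ s, |w i| * a := Finset.sum_le_sum fun i hi =>
        (mul_le_mul_of_nonneg_right (le_abs_self _) (hc i hi).1).trans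
          (mul_le_mul_of_nonneg_left (hc i hi).2 (abs_nonneg _))
    _ = a * ∑ i ∈ s, |w i| := by rw [Finset.mul_sum]; simp_rw [mul_comm]
    _ ≤ a * r := mul_le_mul_of_nonneg_left hw ha

/-- Trace (Laplacian) bound for the Hessian of a two-layer
network output `F (W, w) = wᵀ σ.(Wᵀ x)`, where the trace is the sum of the
second derivatives of `F` along all standard coordinate directions of the
joint variable `(W, w) ∈ ℝ^{d×m} × ℝ^m`. -/
theorem stmt_2 (d m : ℕ) (x : Fin d → ℝ)
    (σ : ℝ → ℝ) (hσ : ContDiff ℝ 2 σ)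
    (a r₁ r₂ : ℝ)
    (hσ'' : ∀ t, 0 ≤ deriv (deriv σ) t ∧ deriv (deriv σ) t ≤ a)
    (F : (Fin d → Fin m → ℝ) × (Fin m → ℝ) → ℝ)
    (hF : ∀ (W : Fin d → Fin m → ℝ) (w : Fin m → ℝ),
      F (W, w) = ∑ i, w i * σ (∑ j, W j i * x j))
    (hx : ∑ j, x j ^ 2 ≤ r₁)
    (W : Fin d → Fin m → ℝ) (w : Fin m → ℝ)
    (hw : ∑ i, |w i| ≤ r₂) :
    (∑ j, ∑ i, iteratedFDeriv ℝ 2 F (W, w)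
        ![(Pi.single j (Pi.single i 1), 0), (Pi.single j (Pi.single i 1), 0)]) +
      (∑ i, iteratedFDeriv ℝ 2 F (W, w)
        ![((0 : Fin d → Fin m → ℝ), Pi.single i 1), ((0 : Fin d → Fin m → ℝ), Pi.single i 1)])
      ≤ a * r₁ * r₂ := by
  obtain rfl : F = fun q => ∑ i, q.2 i * σ (∑ j, q.1 j i * x j) := funext fun q => hF q.1 q.2
  set c : Fin m → ℝ := fun i => deriv (deriv σ) (preactivation x i (W, w))
  have ha : 0 ≤ a := (hσ'' 0).1.trans (hσ'' 0).2
  have hcurv : ∑ i, w i * c i ≤ a * r₂ :=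
    sum_mul_le_of_sum_abs_le _ ha (fun i _ => hσ'' _) hw
  simp only [iteratedFDeriv_two_twoLayer_inputWeight x hσ,
    iteratedFDeriv_two_twoLayer_outputWeight x hσ, Finset.sum_const_zero, add_zero]
  calc ∑ j, ∑ i, w i * c i * x j ^ 2
      = (∑ j, x j ^ 2) * ∑ i, w i * c i := by rw [Finset.sum_mul_sum]; simp_rw [mul_comm]
    _ ≤ (∑ j, x j ^ 2) * (a * r₂) :=
        mul_le_mul_of_nonneg_left hcurv (Finset.sum_nonneg fun j _ => sq_nonneg _)
    _ ≤ r₁ * (a * r₂) :=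
        mul_le_mul_of_nonneg_right hx (mul_nonneg ha ((Finset.sum_nonneg fun i _ =>
          abs_nonneg _).trans hw))
    _ = a * r₁ * r₂ := by ring
end

section
/- Let μ, λ, h be positive reals with λ ≥ 4μ and hλ ≤ 1/4, set β = √(hμ) and let B be the 2×2 real matrix B = [[(2 − β)(1 − hλ), −(1 − β)(1 − hλ)], [1, 0]]. Then for every integer n ≥ 1, ‖Bⁿ (1, 1)ᵀ‖² ≤ 40 (1 − √(hμ)/2)^{2n − 2}, where ‖·‖ is the Euclidean norm on ℝ². (Under these hypotheses B has complex-conjugate eigenvalues of common modulus a = √((1 − β)(1 − hλ)) ≤ 1 − √(hμ)/2.) -/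
open scoped BigOperators
set_option maxHeartbeats 1000000


private lemma stmt13_aux (β hl p q : ℝ) (hp : p = (2 - β) * (1 - hl))
    (hq : q = (1 - β) * (1 - hl)) (B : Matrix (Fin 2) (Fin 2) ℝ)
    (hB : B = !![(2 - β) * (1 - hl), -(1 - β) * (1 - hl); 1, 0]) (w : Fin 2 → ℝ) :
    B.mulVec w = ![p * w 0 - q * w 1, w 0] := by
  funext i
  fin_cases i
  · simp [hB, Matrix.mulVec, dotProduct, Fin.sum_univ_two]
    rw [hp, hq]; ring
  · simp [hB, Matrix.mulVec, dotProduct, Fin.sum_univ_two]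

/-- Power bound for the per-eigendirection Heavy-Ball
update matrix `B = [[(2−β)(1−hλ), −(1−β)(1−hλ)], [1, 0]]` with momentum
`β = √(hμ)`: for `n ≥ 1`, `‖Bⁿ (1,1)ᵀ‖² ≤ 40 (1 − √(hμ)/2)^{2n−2}`. -/
theorem stmt_13 (μ lam h : ℝ) (hμ : 0 < μ) (hlam : 0 < lam) (hh : 0 < h)
    (hlam4 : 4 * μ ≤ lam) (hhl : h * lam ≤ 1 / 4)
    (β : ℝ) (hβ : β = Real.sqrt (h * μ))
    (B : Matrix (Fin 2) (Fin 2) ℝ)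
    (hB : B = !![(2 - β) * (1 - h * lam), -(1 - β) * (1 - h * lam); 1, 0]) :
    ∀ n : ℕ, 1 ≤ n →
      ∑ i, ((B ^ n).mulVec ![1, 1] i) ^ 2
        ≤ 40 * (1 - Real.sqrt (h * μ) / 2) ^ (2 * n - 2) := by
  intro n hn
  obtain ⟨p, hp⟩ : ∃ p : ℝ, p = (2 - β) * (1 - h * lam) := ⟨_, rfl⟩
  obtain ⟨q, hq⟩ : ∃ q : ℝ, q = (1 - β) * (1 - h * lam) := ⟨_, rfl⟩
  obtain ⟨u, hu⟩ : ∃ u : ℝ, u = h * lam := ⟨_, rfl⟩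
  have hhμ : 0 < h * μ := by positivity
  have hβ2 : β ^ 2 = h * μ := by rw [hβ, sq, Real.mul_self_sqrt hhμ.le]
  have hβ0 : 0 ≤ β := by rw [hβ]; positivity
  have hμl : β ^ 2 ≤ u / 4 := by rw [hβ2, hu]; nlinarith
  have hu0 : 0 < u := by rw [hu]; positivity
  have hu4 : u ≤ 1 / 4 := by rw [hu]; exact hhl
  have hβle : β ≤ 1 / 4 := by nlinarith [sq_nonneg (β - 1/4)]
  -- key scalar inequality: 4q - p² ≥ 2u
  have e2 : 4 * q - p ^ 2 = (1 - u) * ((4 - 4 * β) * u - β ^ 2 * (1 - u)) := by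
    rw [hp, hq, hu]; ring
  have e3 : 11 / 4 * u ≤ (4 - 4 * β) * u - β ^ 2 * (1 - u) := by
    nlinarith [mul_nonneg (by linarith : (0:ℝ) ≤ 1 - 4 * β) hu0.le,
      mul_nonneg (sq_nonneg β) hu0.le]
  have hkey : 2 * u ≤ 4 * q - p ^ 2 := by
    rw [e2]
    nlinarith [e3, hu0.le, mul_le_mul_of_nonneg_left e3 (by linarith : (0:ℝ) ≤ 1 - u)]
  have hq1 : q ≤ 1 := by rw [hq]; nlinarith
  have hq0 : 0 ≤ q := by rw [hq]; nlinarith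
  -- pointwise quadratic form inequality
  have hform : ∀ a b : ℝ, u * (a ^ 2 + b ^ 2) ≤ 5 * (a ^ 2 - p * a * b + q * b ^ 2) := by
    intro a b
    have hdisc : 25 * p ^ 2 ≤ 4 * (5 - u) * (5 * q - u) := by
      have hA : 25 * p ^ 2 ≤ 100 * q - 50 * u := by linarith [hkey]
      have hqu : q * u ≤ u := mul_le_of_le_one_left hu0.le hq1
      nlinarith [hqu, sq_nonneg u, hA]
    have h45 : 0 < 4 * (5 - u) := by linarith
    have key2 : 0 ≤ 4 * (5 - u) * (5 * (a ^ 2 - p * a * b + q * b ^ 2) - u * (a ^ 2 + b ^ 2)) := by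
      have hid : 4 * (5 - u) * (5 * (a ^ 2 - p * a * b + q * b ^ 2) - u * (a ^ 2 + b ^ 2))
          = (2 * (5 - u) * a - 5 * p * b) ^ 2
            + (4 * (5 - u) * (5 * q - u) - 25 * p ^ 2) * b ^ 2 := by ring
      rw [hid]
      exact add_nonneg (sq_nonneg _) (mul_nonneg (by linarith) (sq_nonneg b))
    have h3 := (mul_nonneg_iff_of_pos_left h45).mp key2
    linarith
  -- iterates
  obtain ⟨x, hx⟩ : ∃ x : ℕ → ℝ, x = fun m => (B ^ m).mulVec ![1, 1] 0 := ⟨_, rfl⟩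
  obtain ⟨y, hy⟩ : ∃ y : ℕ → ℝ, y = fun m => (B ^ m).mulVec ![1, 1] 1 := ⟨_, rfl⟩
  have hrec : ∀ m : ℕ, x (m + 1) = p * x m - q * y m ∧ y (m + 1) = x m := by
    intro m
    obtain ⟨w, hw⟩ : ∃ w : Fin 2 → ℝ, w = (B ^ m).mulVec ![1, 1] := ⟨_, rfl⟩
    have hxm : x m = w 0 := by rw [hx, hw]
    have hym : y m = w 1 := by rw [hy, hw]
    have h1 : (B ^ (m + 1)).mulVec ![1, 1] = B.mulVec w := by
      rw [hw, Matrix.mulVec_mulVec, ← pow_succ']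
    have h2 : B.mulVec w = ![p * w 0 - q * w 1, w 0] :=
      stmt13_aux β (h * lam) p q hp hq B hB w
    have hx1 : x (m + 1) = (B ^ (m + 1)).mulVec ![1, 1] 0 := by rw [hx]
    have hy1 : y (m + 1) = (B ^ (m + 1)).mulVec ![1, 1] 1 := by rw [hy]
    refine ⟨?_, ?_⟩
    · rw [hx1, h1, h2, hxm, hym]; simp
    · rw [hy1, h1, h2, hxm]; simp
  have hx0 : x 0 = 1 := by rw [hx]; simp [Matrix.mulVec_one]
  have hy0 : y 0 = 1 := by rw [hy]; simp
  have hQ : ∀ m : ℕ, x m ^ 2 - p * x m * y m + q * y m ^ 2 = q ^ m * u := by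
    intro m
    induction m with
    | zero => rw [hx0, hy0, pow_zero, hp, hq, hu]; ring
    | succ k ih =>
      obtain ⟨h1, h2⟩ := hrec k
      rw [h1, h2, pow_succ]
      linear_combination q * ih
  -- combine
  have hbound : x n ^ 2 + y n ^ 2 ≤ 5 * q ^ n := by
    have h5 := hform (x n) (y n)
    rw [hQ n] at h5
    have hqn0 : 0 ≤ q ^ n := pow_nonneg hq0 n
    nlinarith [h5, hu0]
  have hr0 : 0 ≤ 1 - Real.sqrt (h * μ) / 2 := by rw [← hβ]; linarith
  have hr1 : 1 - Real.sqrt (h * μ) / 2 ≤ 1 := by rw [← hβ]; linarith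
  have hqr : q ≤ (1 - Real.sqrt (h * μ) / 2) ^ 2 := by
    rw [← hβ, hq]; nlinarith [sq_nonneg β, hu0, hu]
  have hqn : q ^ n ≤ (1 - Real.sqrt (h * μ) / 2) ^ (2 * n) := by
    calc q ^ n ≤ ((1 - Real.sqrt (h * μ) / 2) ^ 2) ^ n := pow_le_pow_left₀ hq0 hqr n
      _ = (1 - Real.sqrt (h * μ) / 2) ^ (2 * n) := by rw [← pow_mul]
  have hmono : (1 - Real.sqrt (h * μ) / 2) ^ (2 * n) ≤ (1 - Real.sqrt (h * μ) / 2) ^ (2 * n - 2) :=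
    pow_le_pow_of_le_one hr0 hr1 (Nat.sub_le _ _)
  have hsum : ∑ i, ((B ^ n).mulVec ![1, 1] i) ^ 2 = x n ^ 2 + y n ^ 2 := by
    rw [hx, hy]; simp [Fin.sum_univ_two]
  rw [hsum]
  have hpos : 0 ≤ (1 - Real.sqrt (h * μ) / 2) ^ (2 * n - 2) := pow_nonneg hr0 _
  nlinarith [hbound, hqn, hmono, hpos]
end

section
/- Let f : ℝ^d → ℝ be twice continuously differentiable with L-Lipschitz gradient and H-Lipschitz Hessian (L, H > 0). Fix x ≠ y in ℝ^d, set r = ‖y − x‖, let f_x(y) = f(x) + ⟨∇f(x), y − x⟩ + ½ ⟨∇²f(x)(y − x), y − x⟩ be the second-order Taylor expansion of f at x evaluated at y, and for δ > 0 define the four-point estimate f̂ = f(x) + (L r²/δ)(f(x + (δ/(L r²))(y − x)) − f(x)) + (2 H² r⁶/δ²)(f(x + (δ/(2 H r³))(y − x)) + f(x − (δ/(2 H r³))(y − x)) − 2 f(x)). Then |f̂ − f_x(y)| ≤ δ. -/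
/-! Restricted to the line `t ↦ x + t • (y - x)`, `f` becomes a real function `g` whose first
and second derivatives are Lipschitz with constants `L r²` and `H r³`. The first difference
quotient of `g` at step `a` then recovers `g'(0)` up to `L r² a / 2`, and the symmetric second
difference quotient at step `b` recovers `g''(0)` up to `H r³ b / 3`, since the odd terms of the
Taylor expansion cancel. The steps in `f̂` are chosen so that these errors, rescaled, are `δ / 2`
and `δ / 12`. -/

section OneVariable

theorem abs_sub_le_of_abs_deriv_le_mul_pow {φ φ' : ℝ → ℝ} (hφ : ∀ t, HasDerivAt φ (φ' t) t)
    {C : ℝ} {n : ℕ} (hb : ∀ t, |φ' t| ≤ C * |t| ^ n) (a : ℝ) :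
    |φ a - φ 0| ≤ C * |a| ^ (n + 1) / (n + 1) := by
  wlog ha : 0 ≤ a generalizing φ φ' a
  · have hψ : ∀ t, HasDerivAt (fun s => φ (-s)) (-φ' (-t)) t := fun t => by
      simpa [Function.comp_def] using (hφ (-t)).comp t (hasDerivAt_neg t)
    simpa using this hψ (fun t => by simpa using hb (-t)) (-a) (by linarith)
  have hB : ∀ t, HasDerivAt (fun t => C * t ^ (n + 1) / (n + 1)) (C * t ^ n) t := fun t => by
    refine (((hasDerivAt_pow (n + 1) t).const_mul C).div_const _).congr_deriv ?_
    rw [Nat.add_sub_cancel, Nat.cast_succ]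
    field_simp
  have key := image_norm_le_of_norm_deriv_right_le_deriv_boundary (f := fun t => φ t - φ 0)
    (a := 0) (b := a) (fun t _ => ((hφ t).sub_const _).continuousAt.continuousWithinAt)
    (fun t _ => ((hφ t).sub_const _).hasDerivWithinAt) (by simp) hB
    (fun t ht => by simpa [abs_of_nonneg ht.1] using hb t) (Set.right_mem_Icc.2 ha)
  simpa [abs_of_nonneg ha] using key

variable {g g' g'' : ℝ → ℝ} {K : ℝ}

theorem abs_sub_sub_deriv_mul_le (hg : ∀ t, HasDerivAt g (g' t) t)
    (hK : ∀ s t, |g' s - g' t| ≤ K * |s - t|) (a : ℝ) :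
    |g a - g 0 - g' 0 * a| ≤ K * a ^ 2 / 2 := by
  have hφ : ∀ t, HasDerivAt (fun t => g t - g' 0 * t) (g' t - g' 0) t := fun t =>
    ((hg t).sub ((hasDerivAt_id' t).const_mul (g' 0))).congr_deriv (by ring)
  have := abs_sub_le_of_abs_deriv_le_mul_pow hφ (C := K) (n := 1)
    (fun t => by simpa using hK t 0) a
  norm_num at this
  simpa [sub_right_comm] using this

theorem abs_sub_sub_deriv_mul_sub_deriv2_mul_le (hg : ∀ t, HasDerivAt g (g' t) t)
    (hg' : ∀ t, HasDerivAt g' (g'' t) t) (hK : ∀ s t, |g'' s - g'' t| ≤ K * |s - t|) (s : ℝ) :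
    |g s - g 0 - g' 0 * s - g'' 0 * s ^ 2 / 2| ≤ K * |s| ^ 3 / 6 := by
  have hφ : ∀ t, HasDerivAt (fun t => g t - g' 0 * t - g'' 0 * t ^ 2 / 2)
      (g' t - g' 0 - g'' 0 * t) t := fun t =>
    (((hg t).sub ((hasDerivAt_id' t).const_mul (g' 0))).sub
      (((hasDerivAt_pow 2 t).const_mul (g'' 0)).div_const 2)).congr_deriv (by ring)
  have := abs_sub_le_of_abs_deriv_le_mul_pow hφ (C := K / 2) (n := 2)
    (fun t => by simpa [sq_abs, mul_div_right_comm] using abs_sub_sub_deriv_mul_le hg' hK t) s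
  norm_num at this
  rw [show K * |s| ^ 3 / 6 = K / 2 * |s| ^ 3 / 3 by ring]
  convert this using 2
  ring

end OneVariable

section AlongLine

variable {E F : Type*} [NormedAddCommGroup E] [NormedSpace ℝ E]
  [NormedAddCommGroup F] [NormedSpace ℝ F]

theorem hasDerivAt_comp_add_smul {f : E → F} (hf : Differentiable ℝ f) (x v : E) (t : ℝ) :
    HasDerivAt (fun t : ℝ => f (x + t • v)) (fderiv ℝ f (x + t • v) v) t :=
  (hf _).hasFDerivAt.comp_hasDerivAt t (by simpa using ((hasDerivAt_id t).smul_const v).const_add x)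

theorem norm_add_smul_sub_add_smul (x v : E) (s t : ℝ) :
    ‖(x + s • v) - (x + t • v)‖ = |s - t| * ‖v‖ := by
  rw [add_sub_add_left_eq_sub, ← sub_smul, norm_smul, Real.norm_eq_abs]

variable {f : E → ℝ}

theorem abs_sub_sub_fderiv_le {L : ℝ} (hf : Differentiable ℝ f)
    (hgrad : ∀ u w, ‖fderiv ℝ f u - fderiv ℝ f w‖ ≤ L * ‖u - w‖) (x u : E) :
    |f (x + u) - f x - fderiv ℝ f x u| ≤ L * ‖u‖ ^ 2 / 2 := by
  have hlip : ∀ s t : ℝ, |fderiv ℝ f (x + s • u) u - fderiv ℝ f (x + t • u) u|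
      ≤ L * ‖u‖ ^ 2 * |s - t| := fun s t => by
    rw [← Real.norm_eq_abs, ← sub_apply]
    calc _ ≤ ‖fderiv ℝ f (x + s • u) - fderiv ℝ f (x + t • u)‖ * ‖u‖ :=
          ContinuousLinearMap.le_opNorm _ _
      _ ≤ L * (|s - t| * ‖u‖) * ‖u‖ := by
          gcongr
          rw [← norm_add_smul_sub_add_smul]
          exact hgrad _ _
      _ = _ := by ring
  simpa using abs_sub_sub_deriv_mul_le (hasDerivAt_comp_add_smul hf x u) hlip 1

theorem abs_second_difference_sub_hessian_le {H : ℝ} (hf : Differentiable ℝ f)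
    (hf' : Differentiable ℝ (fderiv ℝ f))
    (hhess : ∀ u w, ‖fderiv ℝ (fderiv ℝ f) u - fderiv ℝ (fderiv ℝ f) w‖ ≤ H * ‖u - w‖)
    (x u : E) :
    |f (x + u) + f (x - u) - 2 * f x - fderiv ℝ (fderiv ℝ f) x u u| ≤ H * ‖u‖ ^ 3 / 3 := by
  have hg' : ∀ t : ℝ, HasDerivAt (fun t : ℝ => fderiv ℝ f (x + t • u) u)
      (fderiv ℝ (fderiv ℝ f) (x + t • u) u u) t := fun t => by
    simpa using (hasDerivAt_comp_add_smul hf' x u t).clm_apply (hasDerivAt_const t u)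
  have hlip : ∀ s t : ℝ, |fderiv ℝ (fderiv ℝ f) (x + s • u) u u
      - fderiv ℝ (fderiv ℝ f) (x + t • u) u u| ≤ H * ‖u‖ ^ 3 * |s - t| := fun s t => by
    rw [← Real.norm_eq_abs, ← sub_apply, ← sub_apply]
    calc _ ≤ ‖fderiv ℝ (fderiv ℝ f) (x + s • u) - fderiv ℝ (fderiv ℝ f) (x + t • u)‖
            * ‖u‖ * ‖u‖ := ContinuousLinearMap.le_opNorm₂ _ _ _
      _ ≤ H * (|s - t| * ‖u‖) * ‖u‖ * ‖u‖ := by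
          gcongr
          rw [← norm_add_smul_sub_add_smul]
          exact hhess _ _
      _ = _ := by ring
  have taylor := abs_sub_sub_deriv_mul_sub_deriv2_mul_le
    (hasDerivAt_comp_add_smul hf x u) hg' hlip
  have hplus := taylor 1
  have hminus := taylor (-1)
  norm_num [← sub_eq_add_neg] at hplus hminus
  calc _ = |(f (x + u) - f x - fderiv ℝ f x u - fderiv ℝ (fderiv ℝ f) x u u / 2)
        + (f (x - u) - f x + fderiv ℝ f x u - fderiv ℝ (fderiv ℝ f) x u u / 2)| := by ring_nf
    _ ≤ _ := (abs_add_le _ _).trans (by linarith)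

end AlongLine

/-- The four-point zeroth-order estimate `f̂` approximates
the second-order Taylor expansion `f_x(y)` of an `L`-gradient-Lipschitz,
`H`-Hessian-Lipschitz function within error `δ`. -/
theorem stmt_14 (d : ℕ) (f : EuclideanSpace ℝ (Fin d) → ℝ) (hf : ContDiff ℝ 2 f)
    (L H : ℝ) (hL : 0 < L) (hH : 0 < H)
    (hgrad : ∀ u v, ‖fderiv ℝ f u - fderiv ℝ f v‖ ≤ L * ‖u - v‖)
    (hhess : ∀ u v, ‖fderiv ℝ (fderiv ℝ f) u - fderiv ℝ (fderiv ℝ f) v‖ ≤ H * ‖u - v‖)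
    (x y : EuclideanSpace ℝ (Fin d)) (hxy : x ≠ y)
    (δ : ℝ) (hδ : 0 < δ)
    (r : ℝ) (hr : r = ‖y - x‖)
    (fxy : ℝ)
    (hfxy : fxy = f x + fderiv ℝ f x (y - x)
      + (1 / 2) * fderiv ℝ (fderiv ℝ f) x (y - x) (y - x))
    (fhat : ℝ)
    (hfhat : fhat = f x
      + (L * r ^ 2 / δ) * (f (x + (δ / (L * r ^ 2)) • (y - x)) - f x)
      + (2 * H ^ 2 * r ^ 6 / δ ^ 2) *
        (f (x + (δ / (2 * H * r ^ 3)) • (y - x))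
          + f (x - (δ / (2 * H * r ^ 3)) • (y - x)) - 2 * f x)) :
    |fhat - fxy| ≤ δ := by
  have hdf : Differentiable ℝ f := hf.differentiable (by norm_num)
  have hdf' : Differentiable ℝ (fderiv ℝ f) :=
    (hf.fderiv_right (m := 1) (by norm_num)).differentiable (by norm_num)
  have hr₀ : 0 < r := hr ▸ norm_pos_iff.2 (sub_ne_zero.2 hxy.symm)
  set v := y - x
  set a := δ / (L * r ^ 2) with ha
  set b := δ / (2 * H * r ^ 3) with hb
  set e₁ := f (x + a • v) - f x - fderiv ℝ f x (a • v)
  set e₂ := f (x + b • v) + f (x - b • v) - 2 * f x - fderiv ℝ (fderiv ℝ f) x (b • v) (b • v)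
  have hnorm : ∀ c : ℝ, 0 < c → ‖c • v‖ = c * r := fun c hc => by
    rw [norm_smul, Real.norm_of_nonneg hc.le, hr]
  have he₁ : |e₁| ≤ L * (a * r) ^ 2 / 2 :=
    hnorm a (by positivity) ▸ abs_sub_sub_fderiv_le hdf hgrad x (a • v)
  have he₂ : |e₂| ≤ H * (b * r) ^ 3 / 3 :=
    hnorm b (by positivity) ▸ abs_second_difference_sub_hessian_le hdf hdf' hhess x (b • v)
  have hid : fhat - fxy = L * r ^ 2 / δ * e₁ + 2 * H ^ 2 * r ^ 6 / δ ^ 2 * e₂ := by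
    simp only [hfhat, hfxy, e₁, e₂, map_smul, smul_apply, smul_eq_mul, ha, hb]
    field_simp
    ring
  calc |fhat - fxy| ≤ L * r ^ 2 / δ * |e₁| + 2 * H ^ 2 * r ^ 6 / δ ^ 2 * |e₂| := by
        rw [hid]
        refine (abs_add_le _ _).trans_eq ?_
        rw [abs_mul, abs_mul, abs_of_pos (by positivity : 0 < L * r ^ 2 / δ),
          abs_of_pos (by positivity : 0 < 2 * H ^ 2 * r ^ 6 / δ ^ 2)]
    _ ≤ L * r ^ 2 / δ * (L * (a * r) ^ 2 / 2)
          + 2 * H ^ 2 * r ^ 6 / δ ^ 2 * (H * (b * r) ^ 3 / 3) := by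
        gcongr
    _ = 7 / 12 * δ := by
        rw [ha, hb]
        field_simp
        ring
    _ ≤ δ := by linarith
end

section
/- Let f : ℝ^d → ℝ be convex and twice continuously differentiable with L-Lipschitz gradient and H-Lipschitz Hessian. Fix x̃ ∈ ℝ^d, λ > 0, and constants 0 < σ_u < σ < 1. Let f_{x̃}(y) = f(x̃) + ⟨∇f(x̃), y − x̃⟩ + ½⟨∇²f(x̃)(y − x̃), y − x̃⟩, g(y) = f_{x̃}(y) + (1/(2λ))‖y − x̃‖², and g* = min_y g(y). Suppose y' satisfies g(y') − g* ≤ ε_B and λ ‖y' − x̃‖ ≤ 2σ_u/H, where ε_B < ((σ − σ_u)² / (2λ (Lλ + 1 + (σ − σ_u)²)(L + 1/λ))) · (f(x̃) − g*). Then ‖λ ∇f(y') + y' − x̃‖² ≤ σ² ‖y' − x̃‖². -/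
/-!
Put `r = y' - x̃`, `B = ∇²f(x̃)` and `ℓ = ∇g(y') = ∇f(x̃) + B r + r / λ`, so that
`λ ∇f(y') + r = λ (∇f(y') - ∇f(x̃) - B r) + λ ℓ`. The first term is a Taylor remainder of `∇f`,
of norm at most `λ H ‖r‖² / 2 ≤ σ_u ‖r‖`. The model `g` is `(L + 1/λ)`-smooth, so one gradient
step from `y'` gives `‖ℓ‖² ≤ 2 (L + 1/λ) ε_B`, and the same quadratic upper bound at `x̃` gives
`f(x̃) - g* ≤ ε_B + ‖ℓ‖ ‖r‖ + (L + 1/λ) ‖r‖² / 2`. Against the smallness of `ε_B` these two bounds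
force `λ ‖ℓ‖ ≤ (σ - σ_u) ‖r‖`.
-/

open Set InnerProductSpace

section Taylor

variable {E F : Type*} [NormedAddCommGroup E] [NormedSpace ℝ E] [NormedAddCommGroup F]
  [NormedSpace ℝ F]

theorem norm_sub_sub_fderiv_le_of_lipschitz_fderiv {G : E → F} {H : ℝ} (hG : Differentiable ℝ G)
    (hlip : ∀ u v, ‖fderiv ℝ G u - fderiv ℝ G v‖ ≤ H * ‖u - v‖) (x y : E) :
    ‖G y - G x - fderiv ℝ G x (y - x)‖ ≤ H / 2 * ‖y - x‖ ^ 2 := by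
  set r := y - x
  have hφ : ∀ t : ℝ, HasDerivAt (fun t : ℝ => G (x + t • r) - G x - t • fderiv ℝ G x r)
      (fderiv ℝ G (x + t • r) r - fderiv ℝ G x r) t := by
    intro t
    have hline : HasDerivAt (fun t : ℝ => x + t • r) r t := by
      simpa using ((hasDerivAt_id t).smul_const r).const_add x
    have hlin : HasDerivAt (fun t : ℝ => t • fderiv ℝ G x r) (fderiv ℝ G x r) t := by
      simpa using (hasDerivAt_id t).smul_const (fderiv ℝ G x r)
    exact (((hG _).hasFDerivAt.comp_hasDerivAt t hline).sub_const (G x)).sub hlin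
  have hbound : ∀ t : ℝ, HasDerivAt (fun t : ℝ => H / 2 * ‖r‖ ^ 2 * t ^ 2) (H * ‖r‖ ^ 2 * t) t :=
    fun t => ((hasDerivAt_pow 2 t).const_mul (H / 2 * ‖r‖ ^ 2)).congr_deriv (by push_cast; ring)
  have hφ' : ∀ t ∈ Ico (0 : ℝ) 1,
      ‖fderiv ℝ G (x + t • r) r - fderiv ℝ G x r‖ ≤ H * ‖r‖ ^ 2 * t := by
    intro t ht
    calc ‖fderiv ℝ G (x + t • r) r - fderiv ℝ G x r‖
        ≤ ‖fderiv ℝ G (x + t • r) - fderiv ℝ G x‖ * ‖r‖ :=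
          (fderiv ℝ G (x + t • r) - fderiv ℝ G x).le_opNorm r
      _ ≤ H * ‖t • r‖ * ‖r‖ := by
          gcongr
          simpa using hlip (x + t • r) x
      _ = H * ‖r‖ ^ 2 * t := by rw [norm_smul_of_nonneg ht.1]; ring
  simpa [r] using image_norm_le_of_norm_deriv_right_le_deriv_boundary
    (fun t _ => (hφ t).continuousAt.continuousWithinAt) (fun t _ => (hφ t).hasDerivWithinAt)
    (by simp) hbound hφ' (right_mem_Icc.mpr zero_le_one)

end Taylor

section QuadraticModel

variable {E : Type*} [NormedAddCommGroup E] [InnerProductSpace ℝ E]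

theorem ContinuousLinearMap.apply_self_le_norm_mul_sq (B : E →L[ℝ] E →L[ℝ] ℝ) (v : E) :
    B v v ≤ ‖B‖ * ‖v‖ ^ 2 :=
  calc B v v ≤ ‖B v v‖ := le_abs_self _
    _ ≤ ‖B‖ * ‖v‖ * ‖v‖ := B.le_opNorm₂ v v
    _ = ‖B‖ * ‖v‖ ^ 2 := by ring

theorem le_add_apply_add_sq_of_eq_quadratic {g : E → ℝ} {c L lam : ℝ} {x : E} {ℓ : E →L[ℝ] ℝ}
    {B : E →L[ℝ] E →L[ℝ] ℝ} (hB : ∀ u v, B u v = B v u) (hBL : ‖B‖ ≤ L)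
    (hg : ∀ z, g z = c + ℓ (z - x) + 1 / 2 * B (z - x) (z - x) + 1 / (2 * lam) * ‖z - x‖ ^ 2)
    (w z : E) :
    g z ≤ g w + (ℓ + B (w - x) + (1 / lam) • innerSL ℝ (w - x)) (z - w)
      + (L + 1 / lam) / 2 * ‖z - w‖ ^ 2 := by
  have hexp : g z = g w + (ℓ + B (w - x) + (1 / lam) • innerSL ℝ (w - x)) (z - w)
      + 1 / 2 * B (z - w) (z - w) + 1 / (2 * lam) * ‖z - w‖ ^ 2 := by
    have hz : z - x = (w - x) + (z - w) := by abel
    rw [hg z, hg w, hz]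
    simp only [map_add, add_apply, smul_apply, innerSL_apply_apply, smul_eq_mul, norm_add_sq_real,
      hB (z - w) (w - x)]
    ring
  have hBzw := (B.apply_self_le_norm_mul_sq (z - w)).trans
    (mul_le_mul_of_nonneg_right hBL (sq_nonneg _))
  rw [hexp]
  linear_combination (1 / 2) * hBzw

end QuadraticModel

section Descent

variable {E : Type*} [NormedAddCommGroup E] [InnerProductSpace ℝ E] [CompleteSpace E]

theorem sq_norm_le_of_forall_le_add_apply_add_sq {g : E → ℝ} {m M : ℝ} {w : E} {ℓ : E →L[ℝ] ℝ}
    (hM : 0 < M) (hm : ∀ z, m ≤ g z) (hup : ∀ z, g z ≤ g w + ℓ (z - w) + M / 2 * ‖z - w‖ ^ 2) :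
    ‖ℓ‖ ^ 2 ≤ 2 * M * (g w - m) := by
  set v := (toDual ℝ E).symm ℓ
  have hv : ‖v‖ = ‖ℓ‖ := (toDual ℝ E).symm.norm_map ℓ
  have hℓv : ℓ v = ‖ℓ‖ ^ 2 := by
    rw [← toDual_symm_apply, real_inner_self_eq_norm_sq, hv]
  have hstep := (hm _).trans (hup (w - M⁻¹ • v))
  rw [sub_sub_cancel_left, map_neg, map_smul, hℓv, smul_eq_mul, norm_neg, norm_smul, hv,
    Real.norm_of_nonneg (inv_nonneg.mpr hM.le)] at hstep
  have hdecrease : M⁻¹ * ‖ℓ‖ ^ 2 - M / 2 * (M⁻¹ * ‖ℓ‖) ^ 2 = ‖ℓ‖ ^ 2 / (2 * M) := by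
    field_simp; ring
  have : ‖ℓ‖ ^ 2 / (2 * M) ≤ g w - m := by linarith
  rwa [div_le_iff₀ (by positivity), mul_comm] at this

end Descent

theorem le_mul_of_gap_bounds {K t e s ρ D : ℝ} (hK : 1 ≤ K) (ht : 0 ≤ t) (hs : 0 ≤ s)
    (hρ : 0 ≤ ρ) (hs2 : s ^ 2 ≤ 2 * K * e) (hD : D ≤ e + s * ρ + K / 2 * ρ ^ 2)
    (he : 2 * K * (K + t ^ 2) * e < t ^ 2 * D) : s ≤ t * ρ := by
  -- if `t ρ < s`, the bounds chain to `e ((K - t)² + 2 (K - 1) t²) < 0`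
  by_contra! hlt
  have he0 : 0 ≤ e := by nlinarith
  have hchain : 2 * K * (K + t ^ 2) * e < t ^ 2 * e + t * (2 * K * e) + K / 2 * (2 * K * e) :=
    calc 2 * K * (K + t ^ 2) * e < t ^ 2 * D := he
      _ ≤ t ^ 2 * e + t * (s * (t * ρ)) + K / 2 * (t * ρ) ^ 2 := by
          nlinarith [mul_le_mul_of_nonneg_left hD (sq_nonneg t)]
      _ ≤ t ^ 2 * e + t * s ^ 2 + K / 2 * s ^ 2 := by
          gcongr
          rw [sq]
          exact mul_le_mul_of_nonneg_left hlt.le hs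
      _ ≤ t ^ 2 * e + t * (2 * K * e) + K / 2 * (2 * K * e) := by gcongr
  linarith [mul_nonneg he0 (add_nonneg (sq_nonneg (K - t))
    (mul_nonneg (by linarith : (0 : ℝ) ≤ 2 * (K - 1)) (sq_nonneg t)))]

theorem mul_le_of_gap_bounds {lam L t ε a ρ Δ : ℝ} (hlam : 0 < lam) (hL : 0 ≤ L) (ht : 0 ≤ t)
    (ha : 0 ≤ a) (hρ : 0 ≤ ρ) (ha2 : a ^ 2 ≤ 2 * (L + 1 / lam) * ε)
    (hΔ : Δ ≤ ε + a * ρ + (L + 1 / lam) / 2 * ρ ^ 2)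
    (hε : ε < t ^ 2 / (2 * lam * (L * lam + 1 + t ^ 2) * (L + 1 / lam)) * Δ) :
    lam * a ≤ t * ρ := by
  have hK : lam * (L + 1 / lam) = L * lam + 1 := by field_simp
  rw [div_mul_eq_mul_div, lt_div_iff₀ (by positivity)] at hε
  generalize L + 1 / lam = M at *
  refine le_mul_of_gap_bounds (K := L * lam + 1) (e := lam * ε) (D := lam * Δ)
    (by nlinarith) ht (by positivity) hρ ?_ ?_ ?_
  · linear_combination lam ^ 2 * ha2 + 2 * lam * ε * hK
  · linear_combination lam * hΔ + ρ ^ 2 / 2 * hK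
  · linear_combination lam * hε - 2 * (L * lam + 1 + t ^ 2) * lam * ε * hK

section Gradient

variable {E : Type*} [NormedAddCommGroup E] [InnerProductSpace ℝ E] [CompleteSpace E]

theorem norm_smul_gradient_add_sub_le {f : E → ℝ} {lam : ℝ} (hlam : 0 < lam)
    (B : E →L[ℝ] E →L[ℝ] ℝ) (x y : E) :
    ‖lam • gradient f y + (y - x)‖ ≤ lam * ‖fderiv ℝ f y - fderiv ℝ f x - B (y - x)‖
      + lam * ‖fderiv ℝ f x + B (y - x) + (1 / lam) • innerSL ℝ (y - x)‖ := by
  have hdual : toDual ℝ E (lam • gradient f y + (y - x))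
      = lam • (fderiv ℝ f y - fderiv ℝ f x - B (y - x))
        + lam • (fderiv ℝ f x + B (y - x) + (1 / lam) • innerSL ℝ (y - x)) := by
    ext v
    simp only [gradient, map_add, map_smul, LinearIsometryEquiv.apply_symm_apply, map_sub,
      add_apply, smul_apply, smul_eq_mul, sub_apply, toDual_apply_apply, one_div, smul_add,
      smul_inv_smul₀ hlam.ne', coe_innerSL_apply]
    ring
  rw [← (toDual ℝ E).norm_map, hdual, ← norm_smul_of_nonneg hlam.le, ← norm_smul_of_nonneg hlam.le]
  exact norm_add_le _ _

end Gradient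

theorem stmt_15_general (d : ℕ) (f : EuclideanSpace ℝ (Fin d) → ℝ) (hf : ContDiff ℝ 2 f)
    (L H : ℝ) (hL : 0 < L) (hH : 0 < H)
    (hgrad : ∀ u v, ‖fderiv ℝ f u - fderiv ℝ f v‖ ≤ L * ‖u - v‖)
    (hhess : ∀ u v, ‖fderiv ℝ (fderiv ℝ f) u - fderiv ℝ (fderiv ℝ f) v‖ ≤ H * ‖u - v‖)
    (xt : EuclideanSpace ℝ (Fin d)) (lam : ℝ) (hlam : 0 < lam)
    (σu σ : ℝ) (hσuσ : σu < σ)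
    (g : EuclideanSpace ℝ (Fin d) → ℝ)
    (hg : ∀ z, g z = f xt + fderiv ℝ f xt (z - xt)
      + (1 / 2) * fderiv ℝ (fderiv ℝ f) xt (z - xt) (z - xt)
      + 1 / (2 * lam) * ‖z - xt‖ ^ 2)
    (ymin : EuclideanSpace ℝ (Fin d)) (hymin : ∀ z, g ymin ≤ g z)
    (y' : EuclideanSpace ℝ (Fin d)) (εB : ℝ)
    (hy1 : g y' - g ymin ≤ εB)
    (hy2 : lam * ‖y' - xt‖ ≤ 2 * σu / H)
    (hεB : εB < (σ - σu) ^ 2 / (2 * lam * (L * lam + 1 + (σ - σu) ^ 2) * (L + 1 / lam))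
      * (f xt - g ymin)) :
    ‖lam • gradient f y' + (y' - xt)‖ ^ 2 ≤ σ ^ 2 * ‖y' - xt‖ ^ 2 := by
  set B := fderiv ℝ (fderiv ℝ f) xt
  set r := y' - xt
  set ℓ := fderiv ℝ f xt + B r + (1 / lam) • innerSL ℝ r
  have hB : ∀ u v, B u v = B v u := hf.contDiffAt.isSymmSndFDerivAt (by simp)
  have hBL : ‖B‖ ≤ L := norm_fderiv_le_of_lipschitz ℝ (C := ⟨L, hL.le⟩)
    (.of_dist_le_mul fun u v => by rw [dist_eq_norm, dist_eq_norm]; exact hgrad u v)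
  have hup := le_add_apply_add_sq_of_eq_quadratic hB hBL hg y'
  have hℓ : ‖ℓ‖ ^ 2 ≤ 2 * (L + 1 / lam) * εB :=
    (sq_norm_le_of_forall_le_add_apply_add_sq (by positivity) hymin hup).trans (by gcongr)
  have hgap : f xt - g ymin ≤ εB + ‖ℓ‖ * ‖r‖ + (L + 1 / lam) / 2 * ‖r‖ ^ 2 := by
    have hxt : g xt = f xt := by simp [hg]
    have hℓr : ℓ (xt - y') ≤ ‖ℓ‖ * ‖r‖ := by
      simpa only [r, norm_sub_rev] using (le_abs_self _).trans (ℓ.le_opNorm (xt - y'))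
    have := hup xt
    rw [hxt, norm_sub_rev] at this
    linarith
  have hslope : lam * ‖ℓ‖ ≤ (σ - σu) * ‖r‖ := mul_le_of_gap_bounds hlam hL.le (by linarith)
    (norm_nonneg _) (norm_nonneg _) hℓ hgap hεB
  have htaylor : lam * ‖fderiv ℝ f y' - fderiv ℝ f xt - B r‖ ≤ σu * ‖r‖ := by
    have hHr : H * (lam * ‖r‖) ≤ 2 * σu := by rwa [← le_div_iff₀' hH]
    have := norm_sub_sub_fderiv_le_of_lipschitz_fderiv
      ((hf.fderiv_right (m := 1) (by norm_num)).differentiable one_ne_zero) hhess xt y'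
    nlinarith [norm_nonneg r]
  have hmain : ‖lam • gradient f y' + r‖ ≤ σ * ‖r‖ :=
    (norm_smul_gradient_add_sub_le hlam B xt y').trans (by linarith)
  exact (pow_le_pow_left₀ (norm_nonneg _) hmain 2).trans_eq (mul_pow _ _ _)

/-- Accuracy of an inexact solution of the regularized
second-order subproblem in the large-step A-NPE method: if `y'` is an
`ε_B`-approximate minimizer of `g(y) = f_{x̃}(y) + ‖y − x̃‖²/(2λ)` with
`λ‖y' − x̃‖ ≤ 2σ_u/H` and `ε_B` small enough, then `y'` satisfies the
relative-error proximal condition `‖λ∇f(y') + y' − x̃‖² ≤ σ²‖y' − x̃‖²`. -/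
theorem stmt_15 (d : ℕ) (f : EuclideanSpace ℝ (Fin d) → ℝ) (hf : ContDiff ℝ 2 f)
    (hconv : ConvexOn ℝ Set.univ f)
    (L H : ℝ) (hL : 0 < L) (hH : 0 < H)
    (hgrad : ∀ u v, ‖fderiv ℝ f u - fderiv ℝ f v‖ ≤ L * ‖u - v‖)
    (hhess : ∀ u v, ‖fderiv ℝ (fderiv ℝ f) u - fderiv ℝ (fderiv ℝ f) v‖ ≤ H * ‖u - v‖)
    (xt : EuclideanSpace ℝ (Fin d)) (lam : ℝ) (hlam : 0 < lam)
    (σu σ : ℝ) (hσu0 : 0 < σu) (hσuσ : σu < σ) (hσ1 : σ < 1)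
    (g : EuclideanSpace ℝ (Fin d) → ℝ)
    (hg : ∀ z, g z = f xt + fderiv ℝ f xt (z - xt)
      + (1 / 2) * fderiv ℝ (fderiv ℝ f) xt (z - xt) (z - xt)
      + 1 / (2 * lam) * ‖z - xt‖ ^ 2)
    (ymin : EuclideanSpace ℝ (Fin d)) (hymin : ∀ z, g ymin ≤ g z)
    (y' : EuclideanSpace ℝ (Fin d)) (εB : ℝ)
    (hy1 : g y' - g ymin ≤ εB)
    (hy2 : lam * ‖y' - xt‖ ≤ 2 * σu / H)
    (hεB : εB < (σ - σu) ^ 2 / (2 * lam * (L * lam + 1 + (σ - σu) ^ 2) * (L + 1 / lam))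
      * (f xt - g ymin)) :
    ‖lam • gradient f y' + (y' - xt)‖ ^ 2 ≤ σ ^ 2 * ‖y' - xt‖ ^ 2 :=
  stmt_15_general d f hf L H hL hH hgrad hhess xt lam hlam σu σ hσuσ g hg ymin hymin y' εB hy1 hy2
    hεB
end

section
/- Let f : ℝ^d → ℝ be twice continuously differentiable with H-Lipschitz Hessian (H > 0), and fix x ∈ ℝ^d. Define the cubic-regularized model m(y) = f(x) + ⟨∇f(x), y − x⟩ + ½ ⟨∇²f(x)(y − x), y − x⟩ + (H/6) ‖y − x‖³, let x̃ be a global minimizer of m, and set r̃ = ‖x̃ − x‖. If x' ∈ ℝ^d satisfies m(x') ≤ m(x̃) + H r̃³ / 500, then f(x) − f(x') ≥ H r̃³ / 24. -/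
/-!
Along the segment from `x` to `y`, the Lipschitz bound on the Hessian integrates twice to
`f y ≤ m y`. Along the ray through the minimiser `x̃`, the model is
`f x + a t + b t² + c |t|³` with `c = H r̃³ / 6`, minimised at `t = 1`. Fermat's rule there gives
`a + 2b + 3c = 0`, and comparing with `t = -1` gives `a ≤ 0`, so
`f x - m x̃ = -(a + b + c) ≥ c / 2 = H r̃³ / 12` (Nesterov–Polyak). Finally
`1/12 - 1/500 ≥ 1/24`.
-/

open Set

lemma monotoneOn_Icc_of_hasDerivAt_nonneg {g g' : ℝ → ℝ} {a b : ℝ}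
    (hg : ∀ t, HasDerivAt g (g' t) t) (hg' : ∀ t ∈ Ioo a b, 0 ≤ g' t) : MonotoneOn g (Icc a b) :=
  monotoneOn_of_hasDerivWithinAt_nonneg (convex_Icc a b)
    (fun t _ ↦ (hg t).continuousAt.continuousWithinAt) (fun t _ ↦ (hg t).hasDerivWithinAt)
    (by simpa only [interior_Icc] using hg')

lemma le_taylor_two_add_of_second_deriv_sub_le {φ φ₁ φ₂ : ℝ → ℝ} {K : ℝ}
    (h₁ : ∀ t, HasDerivAt φ (φ₁ t) t) (h₂ : ∀ t, HasDerivAt φ₁ (φ₂ t) t)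
    (hK : ∀ t ∈ Ioo (0 : ℝ) 1, φ₂ t - φ₂ 0 ≤ K * t) :
    φ 1 ≤ φ 0 + φ₁ 0 + φ₂ 0 / 2 + K / 6 := by
  set ψ : ℝ → ℝ := fun t ↦ φ₁ 0 + t * φ₂ 0 + K * t ^ 2 / 2 - φ₁ t
  set χ : ℝ → ℝ := fun t ↦ φ 0 + t * φ₁ 0 + t ^ 2 / 2 * φ₂ 0 + K * t ^ 3 / 6 - φ t
  have hψ : ∀ t, HasDerivAt ψ (φ₂ 0 + K * t - φ₂ t) t := fun t ↦ by
    refine (((((hasDerivAt_id t).mul_const (φ₂ 0)).const_add (φ₁ 0)).add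
      (((hasDerivAt_pow 2 t).const_mul K).div_const 2)).sub (h₂ t)).congr_deriv ?_
    push_cast; ring
  have hχ : ∀ t, HasDerivAt χ (ψ t) t := fun t ↦ by
    refine ((((((hasDerivAt_id t).mul_const (φ₁ 0)).const_add (φ 0)).add
      (((hasDerivAt_pow 2 t).div_const 2).mul_const (φ₂ 0))).add
      (((hasDerivAt_pow 3 t).const_mul K).div_const 6)).sub (h₁ t)).congr_deriv ?_
    simp only [ψ]; push_cast; ring
  have hψ_nonneg : ∀ t ∈ Ioo (0 : ℝ) 1, 0 ≤ ψ t := fun t ht ↦ by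
    have := monotoneOn_Icc_of_hasDerivAt_nonneg hψ (fun s hs ↦ by
      linarith [hK s ⟨hs.1, hs.2.trans ht.2⟩]) (left_mem_Icc.2 ht.1.le)
      (right_mem_Icc.2 ht.1.le) ht.1.le
    simpa [ψ] using this
  have := monotoneOn_Icc_of_hasDerivAt_nonneg hχ hψ_nonneg (left_mem_Icc.2 zero_le_one)
    (right_mem_Icc.2 zero_le_one) zero_le_one
  norm_num [χ] at this
  linarith

lemma half_le_neg_of_forall_cubic_le {a b c : ℝ}
    (hmin : ∀ t, a + b + c ≤ a * t + b * t ^ 2 + c * |t| ^ 3) : c / 2 ≤ -(a + b + c) := by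
  have ha : a ≤ 0 := by
    have := hmin (-1)
    norm_num at this
    linarith
  have hcrit : a + 2 * b + 3 * c = 0 := by
    have hmin_at_one : IsLocalMin (fun t : ℝ ↦ a * t + b * t ^ 2 + c * t ^ 3) 1 := by
      filter_upwards [Ioi_mem_nhds one_pos] with t ht
      simpa [abs_of_pos (mem_Ioi.1 ht)] using hmin t
    refine hmin_at_one.hasDerivAt_eq_zero ?_
    refine ((((hasDerivAt_id 1).const_mul a).add ((hasDerivAt_pow 2 1).const_mul b)).add
      ((hasDerivAt_pow 3 1).const_mul c)).congr_deriv ?_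
    norm_num
    ring
  linarith

section CubicModel

variable {E : Type*} [NormedAddCommGroup E] [NormedSpace ℝ E]

/-- The model of the statement is `m y = f x + cubicModel (f' x) (f'' x) H (y - x)`. -/
noncomputable def cubicModel (g : E →L[ℝ] ℝ) (Q : E →L[ℝ] E →L[ℝ] ℝ) (H : ℝ) (v : E) : ℝ :=
  g v + 1 / 2 * Q v v + H / 6 * ‖v‖ ^ 3

lemma le_add_cubicModel_of_lipschitz_hessian {f : E → ℝ} (hf : ContDiff ℝ 2 f) {H : ℝ}
    (hhess : ∀ u v, ‖fderiv ℝ (fderiv ℝ f) u - fderiv ℝ (fderiv ℝ f) v‖ ≤ H * ‖u - v‖)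
    (x y : E) :
    f y ≤ f x + cubicModel (fderiv ℝ f x) (fderiv ℝ (fderiv ℝ f) x) H (y - x) := by
  set v := y - x
  have hline : ∀ t : ℝ, HasDerivAt (fun t : ℝ ↦ x + t • v) v t := fun t ↦ by
    simpa using ((hasDerivAt_id t).smul_const v).const_add x
  have hf₁ : Differentiable ℝ f := hf.differentiable (by norm_num)
  have hf₂ : Differentiable ℝ (fderiv ℝ f) :=
    (hf.fderiv_right (m := 1) (by norm_num)).differentiable one_ne_zero
  have h₁ : ∀ t : ℝ, HasDerivAt (fun t ↦ f (x + t • v)) (fderiv ℝ f (x + t • v) v) t :=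
    fun t ↦ (hf₁ _).hasFDerivAt.comp_hasDerivAt t (hline t)
  have h₂ : ∀ t : ℝ, HasDerivAt (fun t ↦ fderiv ℝ f (x + t • v) v)
      (fderiv ℝ (fderiv ℝ f) (x + t • v) v v) t := fun t ↦ by
    simpa using ((hf₂ _).hasFDerivAt.comp_hasDerivAt t (hline t)).clm_apply (hasDerivAt_const t v)
  have hK : ∀ t ∈ Ioo (0 : ℝ) 1, fderiv ℝ (fderiv ℝ f) (x + t • v) v v
      - fderiv ℝ (fderiv ℝ f) (x + (0 : ℝ) • v) v v ≤ H * ‖v‖ ^ 3 * t := fun t ht ↦ calc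
    _ = (fderiv ℝ (fderiv ℝ f) (x + t • v) - fderiv ℝ (fderiv ℝ f) x) v v := by simp
    _ ≤ ‖fderiv ℝ (fderiv ℝ f) (x + t • v) - fderiv ℝ (fderiv ℝ f) x‖ * ‖v‖ * ‖v‖ :=
      (Real.le_norm_self _).trans (ContinuousLinearMap.le_opNorm₂ _ v v)
    _ ≤ H * (t * ‖v‖) * ‖v‖ * ‖v‖ := by
      gcongr
      simpa [norm_smul, abs_of_pos ht.1] using hhess (x + t • v) x
    _ = H * ‖v‖ ^ 3 * t := by ring
  have := le_taylor_two_add_of_second_deriv_sub_le h₁ h₂ hK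
  simp only [zero_smul, add_zero, one_smul, v, add_sub_cancel] at this
  rw [cubicModel]
  linarith

lemma cubicModel_smul (g : E →L[ℝ] ℝ) (Q : E →L[ℝ] E →L[ℝ] ℝ) (H t : ℝ) (v : E) :
    cubicModel g Q H (t • v) = g v * t + 1 / 2 * Q v v * t ^ 2 + H / 6 * ‖v‖ ^ 3 * |t| ^ 3 := by
  simp only [cubicModel, map_smul, smul_apply, smul_eq_mul, norm_smul,
    Real.norm_eq_abs]
  ring

lemma le_neg_cubicModel_of_forall_le (g : E →L[ℝ] ℝ) (Q : E →L[ℝ] E →L[ℝ] ℝ) (H : ℝ)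
    {s : E} (hs : ∀ v, cubicModel g Q H s ≤ cubicModel g Q H v) :
    H / 12 * ‖s‖ ^ 3 ≤ -cubicModel g Q H s := by
  have hs_def : cubicModel g Q H s = g s + 1 / 2 * Q s s + H / 6 * ‖s‖ ^ 3 := rfl
  have := half_le_neg_of_forall_cubic_le (c := H / 6 * ‖s‖ ^ 3) fun t ↦ by
    simpa only [hs_def, cubicModel_smul] using hs (t • s)
  linarith

end CubicModel

/-- Sufficient decrease from an inexact minimizer of the
cubic-regularized model: if `x̃` globally minimizes the cubic model `m` of an
`H`-Hessian-Lipschitz function `f` around `x`, `r̃ = ‖x̃ − x‖`, and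
`m(x') ≤ m(x̃) + H r̃³/500`, then `f(x) − f(x') ≥ H r̃³/24`. -/
theorem stmt_19 (d : ℕ) (f : EuclideanSpace ℝ (Fin d) → ℝ) (hf : ContDiff ℝ 2 f)
    (H : ℝ) (hH : 0 < H)
    (hhess : ∀ u v, ‖fderiv ℝ (fderiv ℝ f) u - fderiv ℝ (fderiv ℝ f) v‖ ≤ H * ‖u - v‖)
    (x : EuclideanSpace ℝ (Fin d))
    (m : EuclideanSpace ℝ (Fin d) → ℝ)
    (hm : ∀ z, m z = f x + fderiv ℝ f x (z - x)
      + (1 / 2) * fderiv ℝ (fderiv ℝ f) x (z - x) (z - x)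
      + H / 6 * ‖z - x‖ ^ 3)
    (xt : EuclideanSpace ℝ (Fin d)) (hxt : ∀ z, m xt ≤ m z)
    (r : ℝ) (hr : r = ‖xt - x‖)
    (x' : EuclideanSpace ℝ (Fin d)) (hx' : m x' ≤ m xt + H * r ^ 3 / 500) :
    H * r ^ 3 / 24 ≤ f x - f x' := by
  set M := cubicModel (fderiv ℝ f x) (fderiv ℝ (fderiv ℝ f) x) H
  have hm' : ∀ z, m z = f x + M (z - x) := fun z ↦ by
    simp only [hm, M, cubicModel]
    ring
  have hf_le : f x' ≤ m x' := hm' x' ▸ le_add_cubicModel_of_lipschitz_hessian hf hhess x x'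
  have hdecrease : H / 12 * r ^ 3 ≤ f x - m xt := by
    have := le_neg_cubicModel_of_forall_le _ _ H (s := xt - x) fun v ↦ by
      simpa only [hm', add_sub_cancel_right, add_le_add_iff_left] using hxt (v + x)
    rw [hm', hr]
    linarith
  have : 0 ≤ H * r ^ 3 := by rw [hr]; positivity
  linarith
end
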